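/- arXiv:1902.10012 — 3 statements merged into one kernel-verified Lean document; each statement's English description precedes it below -/
import Mathlib

section
/- Let π be a group and 𝔸 a normal subgroup of π, and let (K_m)_{m≥1} be the subgroups defined by K_1 = π, K_2 = 𝔸 ⊔ Γ_2π, and K_m = [K_{m−1}, K_1] ⊔ [K_{m−2}, K_2] for m ≥ 3. Then (K_m) is the smallest N-series of π whose second term contains 𝔸: if (G_m)_{m≥1} is any N-series of π (so G_1 = π, G_{m+1} ≤ G_m, and [G_i, G_j] ≤ G_{i+j} for all i, j ≥ 1) with 𝔸 ≤ G_2, then K_m ≤ G_m for every m ≥ 1. -/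
variable {π : Type*} [Group π]

/-- The series `(K_m)` associated to a (normal) subgroup `𝔸 = A` of `π`:
`K_1 = π`, `K_2 = 𝔸 ⊔ Γ₂π` and `K_m = [K_{m-1}, K_1] ⊔ [K_{m-2}, K_2]` for `m ≥ 3`.
Here `Γ_m π = lowerCentralSeries π (m-1)`.  The value at `0` is a junk value `⊤`. -/
def altK (A : Subgroup π) : ℕ → Subgroup π
  | 0 => ⊤
  | 1 => ⊤
  | 2 => A ⊔ (⊤ : Subgroup π).lowerCentralSeries 1
  | (m + 3) => ⁅altK A (m + 2), altK A 1⁆ ⊔ ⁅altK A (m + 1), altK A 2⁆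

theorem altK_smallest_general (π : Type*) [Group π] (A : Subgroup π)
    (G : ℕ → Subgroup π)
    (hG1 : G 1 = ⊤)
    (hGcomm : ∀ i j : ℕ, 1 ≤ i → 1 ≤ j → ⁅G i, G j⁆ ≤ G (i + j))
    (hA2 : A ≤ G 2) :
    ∀ m : ℕ, 1 ≤ m → altK A m ≤ G m := by
  intro m
  induction m using Nat.strong_induction_on with
  | _ m ih =>
    match m with
    | 0 => intro h; omega
    | 1 => intro _; exact hG1 ▸ le_top
    | 2 =>
      intro _
      have hΓ₂ : (⊤ : Subgroup π).lowerCentralSeries 1 = ⁅G 1, G 1⁆ := by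
        rw [Subgroup.top_lowerCentralSeries_one, hG1]; rfl
      rw [altK]
      exact sup_le hA2 (hΓ₂ ▸ hGcomm 1 1 le_rfl le_rfl)
    | m + 3 =>
      intro _
      have commutator_le {i j : ℕ} (hi : 1 ≤ i) (hj : 1 ≤ j) (him : i < m + 3) (hjm : j < m + 3) :
          ⁅altK A i, altK A j⁆ ≤ G (i + j) :=
        (Subgroup.commutator_mono (ih i him hi) (ih j hjm hj)).trans (hGcomm i j hi hj)
      rw [altK]
      exact sup_le (commutator_le (by omega) le_rfl (by omega) (by omega))
        (commutator_le (by omega) (by omega) (by omega) (by omega))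

/-- (K_m) is the smallest N-series of π whose second term contains 𝔸. -/
theorem altK_smallest (π : Type*) [Group π] (A : Subgroup π) (hA : A.Normal)
    (G : ℕ → Subgroup π)
    (hG1 : G 1 = ⊤)
    (hGdec : ∀ m : ℕ, 1 ≤ m → G (m + 1) ≤ G m)
    (hGcomm : ∀ i j : ℕ, 1 ≤ i → 1 ≤ j → ⁅G i, G j⁆ ≤ G (i + j))
    (hA2 : A ≤ G 2) :
    ∀ m : ℕ, 1 ≤ m → altK A m ≤ G m :=
  altK_smallest_general π A G hG1 hGcomm hA2
end

section
/- Let π be a group, 𝔸 a normal subgroup of π, and (K_m)_{m≥1} the associated N-series (K_1 = π, K_2 = 𝔸 ⊔ Γ_2π, K_m = [K_{m−1}, K_1] ⊔ [K_{m−2}, K_2] for m ≥ 3). Then for every m ≥ 1, Γ_mπ ≤ K_m ≤ Γ_{⌈m/2⌉}π, where ⌈m/2⌉ denotes the least integer greater than or equal to m/2. -/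
variable {π : Type*} [Group π]

/-! Both bounds follow by induction from the recursion for `K_m`. Its first term `[K_{m-1}, π]`
contains `[Γ_{m-1}π, π] = Γ_mπ`. For the upper bound, each term is a commutator with `π` of some
`K_j` with `j ≥ m - 2`, hence lies in `[Γ_{⌈(m-2)/2⌉}π, π] = Γ_{⌈m/2⌉}π`. -/

section

variable (A : Subgroup π)

theorem altK_one : altK A 1 = ⊤ := by rw [altK]

theorem altK_two : altK A 2 = A ⊔ (⊤ : Subgroup π).lowerCentralSeries 1 := by rw [altK]

theorem altK_add_three (m : ℕ) :
    altK A (m + 3) = ⁅altK A (m + 2), ⊤⁆ ⊔ ⁅altK A (m + 1), altK A 2⁆ := by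
  rw [altK.eq_4, altK_one]

theorem commutator_altK_top_le (n : ℕ) : ⁅altK A (n + 1), ⊤⁆ ≤ altK A (n + 2) :=
  match n with
  | 0 => by rw [altK_one, altK_two]; exact le_sup_right
  | m + 1 => by rw [altK_add_three]; exact le_sup_left

theorem lowerCentralSeries_le_altK (n : ℕ) :
    (⊤ : Subgroup π).lowerCentralSeries n ≤ altK A (n + 1) := by
  induction n with
  | zero => rw [altK_one]; exact le_top
  | succ n ih => exact (Subgroup.commutator_mono ih le_rfl).trans (commutator_altK_top_le A n)

theorem altK_le_lowerCentralSeries :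
    ∀ n : ℕ, altK A (n + 1) ≤ (⊤ : Subgroup π).lowerCentralSeries (n / 2)
  | 0 | 1 => le_top
  | n + 2 => by
    have h₁ := Subgroup.commutator_mono (altK_le_lowerCentralSeries (n + 1)) (le_refl ⊤)
    have h₂ := Subgroup.commutator_mono (altK_le_lowerCentralSeries n) (le_top : altK A 2 ≤ ⊤)
    rw [altK_add_three, show (n + 2) / 2 = n / 2 + 1 by omega]
    refine sup_le (h₁.trans ?_) h₂
    exact (⊤ : Subgroup π).lowerCentralSeries_antitone (by omega : n / 2 + 1 ≤ (n + 1) / 2 + 1)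

end

theorem lcs_le_altK_le_lcs_general (π : Type*) [Group π] (A : Subgroup π) :
    ∀ m : ℕ, 1 ≤ m →
      (⊤ : Subgroup π).lowerCentralSeries (m - 1) ≤ altK A m ∧
      altK A m ≤ (⊤ : Subgroup π).lowerCentralSeries ((m + 1) / 2 - 1) := by
  rintro (_ | n) hm
  · omega
  · refine ⟨lowerCentralSeries_le_altK A n, ?_⟩
    rw [show (n + 1 + 1) / 2 - 1 = n / 2 by omega]
    exact altK_le_lowerCentralSeries A n

/-- For every m ≥ 1, Γ_m π ≤ K_m ≤ Γ_{⌈m/2⌉} π.  Here Γ_k π is lowerCentralSeries π (k-1)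
and ⌈m/2⌉ = (m+1)/2 in natural division. -/
theorem lcs_le_altK_le_lcs (π : Type*) [Group π] (A : Subgroup π) (hA : A.Normal) :
    ∀ m : ℕ, 1 ≤ m →
      (⊤ : Subgroup π).lowerCentralSeries (m - 1) ≤ altK A m ∧
      altK A m ≤ (⊤ : Subgroup π).lowerCentralSeries ((m + 1) / 2 - 1) :=
  lcs_le_altK_le_lcs_general π A
end

section
/- Let π be a group, 𝔸 a normal subgroup of π, (K_m)_{m≥1} the associated N-series (K_1 = π, K_2 = 𝔸 ⊔ Γ_2π, K_m = [K_{m−1}, K_1] ⊔ [K_{m−2}, K_2] for m ≥ 3), and let p : π → π′ := π/𝔸 be the quotient map. Let m ≥ 1 and let φ be an automorphism of π such that φ(x)x⁻¹ ∈ K_{m+1} for every x ∈ π and φ(y)y⁻¹ ∈ K_{m+2} for every y ∈ K_2. Then p(φ(α)) ∈ Γ_{m+2}π′ for every α ∈ 𝔸. (This proves the inclusion J^𝔞_mℳ ⊆ J^L_{m+1}ℳ of the alternative Johnson filtration in the Johnson–Levine filtration.) -/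
/-!
Since `𝔸 ≤ K₂`, the hypothesis on `K₂` gives `φ(α)α⁻¹ ∈ K_{m+2}`, and `p(φ(α)) = p(φ(α)α⁻¹)`
because `p(α) = 1`. It remains to see that `p(K_{n+1}) ≤ Γ_{n+1}π′`, by induction along the
recursion defining `K`: `p` kills `𝔸`, so `p(K₂) ≤ Γ₂π′`, and the step only needs
`[Γ_iπ′, Γ_jπ′] ≤ Γ_{i+j}π′`, which follows from the three subgroups lemma.
-/

variable {π : Type*} [Group π]

namespace Subgroup

variable {G : Type*} [Group G]

theorem commutator_commutator_le_sup (H₁ H₂ H₃ : Subgroup G)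
    [H₁.Normal] [H₂.Normal] [H₃.Normal] :
    ⁅⁅H₁, H₂⁆, H₃⁆ ≤ ⁅⁅H₂, H₃⁆, H₁⁆ ⊔ ⁅⁅H₃, H₁⁆, H₂⁆ := by
  set N := ⁅⁅H₂, H₃⁆, H₁⁆ ⊔ ⁅⁅H₃, H₁⁆, H₂⁆
  have : N.Normal := sup_normal _ _
  have map_eq_bot {K : Subgroup G} (hK : K ≤ N) : K.map (QuotientGroup.mk' N) = ⊥ := by
    rwa [map_eq_bot_iff, QuotientGroup.ker_mk']
  have h := commutator_commutator_eq_bot_of_rotate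
    (H₁ := H₁.map (QuotientGroup.mk' N)) (H₂ := H₂.map (QuotientGroup.mk' N))
    (H₃ := H₃.map (QuotientGroup.mk' N))
    (by simpa only [map_commutator] using map_eq_bot le_sup_left)
    (by simpa only [map_commutator] using map_eq_bot le_sup_right)
  rwa [← map_commutator, ← map_commutator, map_eq_bot_iff, QuotientGroup.ker_mk'] at h

theorem commutator_top_lowerCentralSeries_le (a b : ℕ) :
    ⁅(⊤ : Subgroup G).lowerCentralSeries a, (⊤ : Subgroup G).lowerCentralSeries b⁆ ≤
      (⊤ : Subgroup G).lowerCentralSeries (a + b + 1) := by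
  induction b generalizing a with
  | zero => exact le_rfl
  | succ b ih =>
    rw [lowerCentralSeries_succ, commutator_comm]
    refine (commutator_commutator_le_sup _ _ _).trans (sup_le ?_ ?_)
    · rw [commutator_comm ⊤, ← lowerCentralSeries_succ]
      exact (ih (a + 1)).trans_eq (by rw [Nat.add_right_comm a 1 b]; rfl)
    · exact commutator_mono (ih a) le_rfl

end Subgroup

theorem map_altK_le_lowerCentralSeries (A : Subgroup π) [A.Normal] :
    ∀ n : ℕ, (altK A (n + 1)).map (QuotientGroup.mk' A) ≤
      (⊤ : Subgroup (π ⧸ A)).lowerCentralSeries n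
  | 0 => le_top
  | 1 => by
    rw [altK, Subgroup.map_sup, Subgroup.map_lowerCentralSeries,
      Subgroup.map_top_of_surjective _ (QuotientGroup.mk'_surjective A)]
    refine sup_le (le_of_eq_of_le ?_ bot_le) le_rfl
    rw [Subgroup.map_eq_bot_iff, QuotientGroup.ker_mk']
  | n + 2 => by
    rw [altK, Subgroup.map_sup, Subgroup.map_commutator, Subgroup.map_commutator]
    refine sup_le (Subgroup.commutator_mono (map_altK_le_lowerCentralSeries A (n + 1)) le_top) ?_
    exact (Subgroup.commutator_mono (map_altK_le_lowerCentralSeries A n)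
      (map_altK_le_lowerCentralSeries A 1)).trans
      (Subgroup.commutator_top_lowerCentralSeries_le n 1)

theorem stmt9_general (π : Type*) [Group π] (A : Subgroup π) [A.Normal]
    (m : ℕ) (φ : π ≃* π)
    (hφ2 : ∀ y : π, y ∈ altK A 2 → φ y * y⁻¹ ∈ altK A (m + 2)) :
    ∀ α ∈ A, QuotientGroup.mk' A (φ α) ∈ (⊤ : Subgroup (π ⧸ A)).lowerCentralSeries (m + 1) := by
  intro α hα
  have hαK₂ : α ∈ altK A 2 := by
    rw [altK]
    exact Subgroup.mem_sup_left hα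
  have hα_one : QuotientGroup.mk' A α = 1 := (QuotientGroup.eq_one_iff α).mpr hα
  have h_image : QuotientGroup.mk' A (φ α) = QuotientGroup.mk' A (φ α * α⁻¹) := by
    rw [map_mul, map_inv, hα_one, inv_one, mul_one]
  rw [h_image]
  exact map_altK_le_lowerCentralSeries A (m + 1) (Subgroup.mem_map_of_mem _ (hφ2 α hαK₂))

/-- If φ represents an element of the m-th term of the alternative Johnson filtration
(that is, φ(x)x⁻¹ ∈ K_{m+1} for x ∈ π and φ(y)y⁻¹ ∈ K_{m+2} for y ∈ K₂), then the image
of φ(α) in π' = π/𝔸 lies in Γ_{m+2}π' for every α ∈ 𝔸. -/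
theorem stmt9 (π : Type*) [Group π] (A : Subgroup π) [A.Normal]
    (m : ℕ) (hm : 1 ≤ m) (φ : π ≃* π)
    (hφ1 : ∀ x : π, φ x * x⁻¹ ∈ altK A (m + 1))
    (hφ2 : ∀ y : π, y ∈ altK A 2 → φ y * y⁻¹ ∈ altK A (m + 2)) :
    ∀ α ∈ A, QuotientGroup.mk' A (φ α) ∈ (⊤ : Subgroup (π ⧸ A)).lowerCentralSeries (m + 1) :=
  stmt9_general π A m φ hφ2
end
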